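/- arXiv:2107.10586 — 2 statements merged into one kernel-verified Lean document; each statement's English description precedes it below -/
import Mathlib

section
/- For any z₀ in the upper half-plane, ∫₀^π Im(e^{t S}·z₀) dt = π, where e^{tS} = [[cos t, sin t],[−sin t, cos t]] acts by Möbius transformations. Consequently the phase factor j(e^{π Ŝ_B}, z) = exp(2iB∫₀^π Im(e^{tS}·z) dt) equals e^{2πiB}, independent of z. -/
/-!
With `D t = -sin t · z + cos t` the denominator of the action, `D' = -(cos t · z + sin t)`, so
`e^{tS}·z = -D'/D` and the integrand is `-Im (D'/D) = -(d/dt) arg D`. For `t ∈ (0, π)` one has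
`Im D t = -sin t · Im z < 0`, so `I · D` stays in the right half-plane, where `arg` is a smooth
branch, while travelling from `I` (at `t = 0`) to `-I` (at `t = π`): the integral is
`arg I - arg (-I) = π`.
-/

open Complex Real

/-- The Möbius action of e^{tS} = [[cos t, sin t],[−sin t, cos t]]. -/
noncomputable def rotAct (t : ℝ) (z : ℂ) : ℂ :=
  ((Real.cos t : ℂ) * z + (Real.sin t : ℂ)) / (-(Real.sin t : ℂ) * z + (Real.cos t : ℂ))

open Set intervalIntegral

theorem HasDerivAt.im {f : ℝ → ℂ} {f' : ℂ} {x : ℝ} (hf : HasDerivAt f f' x) :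
    HasDerivAt (fun t => (f t).im) f'.im x :=
  imCLM.hasFDerivAt.comp_hasDerivAt x hf

theorem integral_im_div_eq_arg_sub {f f' : ℝ → ℂ} {a b : ℝ}
    (hf : ∀ t ∈ uIcc a b, HasDerivAt f (f' t) t) (hf' : ContinuousOn f' (uIcc a b))
    (hslit : ∀ t ∈ uIcc a b, f t ∈ slitPlane) :
    ∫ t in a..b, (f' t / f t).im = arg (f b) - arg (f a) := by
  have hlog (t) (ht : t ∈ uIcc a b) : HasDerivAt (fun s => arg (f s)) (f' t / f t).im t := by
    simpa only [log_im] using ((hf t ht).clog_real (hslit t ht)).im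
  have hcont : ContinuousOn (fun t => f' t / f t) (uIcc a b) :=
    hf'.div (fun t ht => (hf t ht).continuousAt.continuousWithinAt)
      (fun t ht => slitPlane_ne_zero (hslit t ht))
  exact integral_eq_sub_of_hasDerivAt hlog
    (continuous_im.comp_continuousOn hcont).intervalIntegrable

noncomputable def rotDenom (z : ℂ) (t : ℝ) : ℂ := -(Real.sin t : ℂ) * z + (Real.cos t : ℂ)

theorem hasDerivAt_rotDenom (z : ℂ) (t : ℝ) :
    HasDerivAt (rotDenom z) (-((Real.cos t : ℂ) * z + Real.sin t)) t := by
  have hsin := (Real.hasDerivAt_sin t).ofReal_comp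
  have hcos := (Real.hasDerivAt_cos t).ofReal_comp
  exact ((hsin.neg.mul_const z).add hcos).congr_deriv (by push_cast; ring)

theorem I_mul_rotDenom_mem_slitPlane {z : ℂ} (hz : 0 < z.im) {t : ℝ} (ht : t ∈ Icc 0 π) :
    I * rotDenom z t ∈ slitPlane := by
  rcases (sin_nonneg_of_nonneg_of_le_pi ht.1 ht.2).lt_or_eq with hs | hs
  · left
    have : (I * rotDenom z t).re = Real.sin t * z.im := by
      simp [rotDenom, -ofReal_sin, -ofReal_cos]
    rw [this]; positivity
  · right
    have : (I * rotDenom z t).im = Real.cos t := by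
      simp [rotDenom, ← hs, -ofReal_sin, -ofReal_cos]
    rw [this]
    exact fun hc => by simpa [← hs, hc] using Real.sin_sq_add_cos_sq t

theorem integral_im_rotAct {z : ℂ} (hz : 0 < z.im) :
    ∫ t in (0:ℝ)..π, (rotAct t z).im = π := by
  have hderiv (t : ℝ) : HasDerivAt (fun s => I * rotDenom z s)
      (I * -((Real.cos t : ℂ) * z + Real.sin t)) t :=
    (hasDerivAt_rotDenom z t).const_mul I
  have hquot (t : ℝ) : (I * -((Real.cos t : ℂ) * z + Real.sin t)) / (I * rotDenom z t) =
      -rotAct t z := by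
    rw [mul_div_mul_left _ _ I_ne_zero, neg_div, rotAct, rotDenom]
  have key := integral_im_div_eq_arg_sub (fun t _ => hderiv t) (by fun_prop)
    (fun t ht => I_mul_rotDenom_mem_slitPlane hz (by rwa [uIcc_of_le pi_pos.le] at ht))
  simp only [hquot, neg_im, integral_neg] at key
  have h0 : rotDenom z 0 = 1 := by simp [rotDenom]
  have hπ : rotDenom z π = -1 := by simp [rotDenom]
  rw [h0, hπ, mul_one, mul_neg_one, arg_I, arg_neg_I] at key
  linarith

/-- ∫₀^π Im(e^{tS}·z₀) dt = π for z₀ ∈ ℍ; hence the phase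
exp(2iB ∫₀^π Im(e^{tS}·z) dt) = e^{2πiB}, independent of z. -/
theorem integral_im_rot_orbit (B : ℝ) (z₀ : ℂ) (hz₀ : 0 < z₀.im) :
    (∫ t in (0:ℝ)..Real.pi, (rotAct t z₀).im) = Real.pi ∧
    Complex.exp (2 * Complex.I * (B : ℂ) *
        ((∫ t in (0:ℝ)..Real.pi, (rotAct t z₀).im : ℝ) : ℂ)) =
      Complex.exp (2 * Real.pi * Complex.I * (B : ℂ)) := by
  have h := integral_im_rotAct hz₀
  refine ⟨h, ?_⟩
  rw [h]
  congr 1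
  ring
end

section
/- Along the orbit z(t) = e^{tS}·z₀ in the upper half-plane, the integral ∫₀^θ Im(z(t)) dt equals −Im log(−sin θ · z₀ + cos θ) (for θ such that the path avoids branch issues), i.e. the antiderivative of y(t) = Im(e^{tS}z₀) is −arg(−sin t · z₀ + cos t). -/
open Complex Real

noncomputable def denomPath (z₀ : ℂ) (t : ℝ) : ℂ :=
  -(Real.sin t : ℂ) * z₀ + (Real.cos t : ℂ)

/-! The denominator `d t = denomPath z₀ t` satisfies `d' = -(cos t · z₀ + sin t)`, so
`e^{tS}·z₀ = -d'/d` is minus the logarithmic derivative of `d`. Its imaginary part is therefore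
the derivative of `-arg d` wherever `d` avoids the branch cut, and the fundamental theorem of
calculus with `d 0 = 1` gives the integral. -/

theorem HasDerivAt.arg_real {f : ℝ → ℂ} {f' : ℂ} {x : ℝ} (hf : HasDerivAt f f' x)
    (hx : f x ∈ slitPlane) : HasDerivAt (fun t => arg (f t)) (f' / f x).im x := by
  simpa only [Function.comp_def, imCLM_apply, log_im] using
    imCLM.hasFDerivAt.comp_hasDerivAt x (hf.clog_real hx)

theorem hasDerivAt_denomPath (z₀ : ℂ) (t : ℝ) :
    HasDerivAt (denomPath z₀) (-((Real.cos t : ℂ) * z₀ + (Real.sin t : ℂ))) t := by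
  have hsin := (Real.hasDerivAt_sin t).ofReal_comp
  have hcos := (Real.hasDerivAt_cos t).ofReal_comp
  exact ((hsin.neg.mul_const z₀).add hcos).congr_deriv (by push_cast; ring)

theorem rotAct_eq_neg_deriv_div (z₀ : ℂ) (t : ℝ) :
    rotAct t z₀ = -(-((Real.cos t : ℂ) * z₀ + (Real.sin t : ℂ)) / denomPath z₀ t) := by
  rw [rotAct, denomPath, neg_div, neg_neg]

theorem continuousOn_rotAct_im {z₀ : ℂ} {s : Set ℝ} (hs : ∀ t ∈ s, denomPath z₀ t ≠ 0) :
    ContinuousOn (fun t => (rotAct t z₀).im) s :=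
  continuous_im.comp_continuousOn (ContinuousOn.div (by fun_prop) (by fun_prop) hs)

theorem hasDerivAt_neg_arg_denomPath (z₀ : ℂ) {t : ℝ} (ht : denomPath z₀ t ∈ slitPlane) :
    HasDerivAt (fun s => -arg (denomPath z₀ s)) (rotAct t z₀).im t := by
  rw [rotAct_eq_neg_deriv_div, neg_im]
  exact ((hasDerivAt_denomPath z₀ t).arg_real ht).neg

theorem integral_im_eq_neg_arg_general (z₀ : ℂ) :
    (∀ t : ℝ, denomPath z₀ t ∈ Complex.slitPlane →
      HasDerivAt (fun s => -Complex.arg (denomPath z₀ s)) ((rotAct t z₀).im) t) ∧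
    (∀ θ : ℝ, (∀ t ∈ Set.uIcc (0:ℝ) θ, denomPath z₀ t ∈ Complex.slitPlane) →
      (∫ t in (0:ℝ)..θ, (rotAct t z₀).im) = -(Complex.log (denomPath z₀ θ)).im) := by
  refine ⟨fun t => hasDerivAt_neg_arg_denomPath z₀, fun θ hθ => ?_⟩
  have hint : IntervalIntegrable (fun t => (rotAct t z₀).im) MeasureTheory.volume 0 θ :=
    (continuousOn_rotAct_im fun t ht => slitPlane_ne_zero (hθ t ht)).intervalIntegrable
  rw [intervalIntegral.integral_eq_sub_of_hasDerivAt
    (fun t ht => hasDerivAt_neg_arg_denomPath z₀ (hθ t ht)) hint]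
  simp [denomPath, log_im]

/-- −arg(−sin t · z₀ + cos t) is an antiderivative of Im(e^{tS}·z₀) away from
the branch cut, and ∫₀^θ Im(e^{tS}·z₀) dt = −Im log(−sin θ · z₀ + cos θ) when the path stays
off the branch cut. -/
theorem integral_im_eq_neg_arg (z₀ : ℂ) (hz₀ : 0 < z₀.im) :
    (∀ t : ℝ, denomPath z₀ t ∈ Complex.slitPlane →
      HasDerivAt (fun s => -Complex.arg (denomPath z₀ s)) ((rotAct t z₀).im) t) ∧
    (∀ θ : ℝ, (∀ t ∈ Set.uIcc (0:ℝ) θ, denomPath z₀ t ∈ Complex.slitPlane) →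
      (∫ t in (0:ℝ)..θ, (rotAct t z₀).im) = -(Complex.log (denomPath z₀ θ)).im) :=
  integral_im_eq_neg_arg_general z₀
end
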